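/- arXiv:2404.04795 — 3 statements merged into one kernel-verified Lean document; each statement's English description precedes it below -/
import Mathlib

section
/- Let a_1, ..., a_n be distinct reals, let x1 ≤ x* < x2 be indices, and suppose every increasing subsequence in the index range [x1, x2] has length at most some bound. Define L(α) as the minimum peak over increasing subsequences of length α with indices in [x1, x*], and R(β) as the maximum base over increasing subsequences of length β with indices in (x*, x2] (both defined only when such subsequences exist). Then the length of the longest increasing subsequence of (a_{x1}, ..., a_{x2}) equals the maximum of: (i) the largest α for which L(α) is defined, (ii) the largest β for which R(β) is defined, and (iii) max{α + β : L(α) and R(β) are both defined and L(α) < R(β)}. -/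
def IncSub (a : ℕ → ℝ) (lo hi : ℕ) (l : List ℕ) : Prop :=
  l.Chain' (· < ·) ∧ (∀ i ∈ l, lo ≤ i ∧ i ≤ hi) ∧ (l.map a).Chain' (· < ·)

/-- `LPeak a x1 xs α v`: among increasing subsequences of length `α` with indices in
`[x1, xs]`, the minimum possible peak (last value) exists and equals `v`. -/
def LPeak (a : ℕ → ℝ) (x1 xs : ℕ) (α : ℕ) (v : ℝ) : Prop :=
  IsLeast {v' | ∃ l i, IncSub a x1 xs l ∧ l.length = α ∧ l.getLast? = some i ∧ v' = a i} v

/-- `RBase a xs x2 β v`: among increasing subsequences of length `β` with indices in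
`(xs, x2]`, the maximum possible base (first value) exists and equals `v`. -/
def RBase (a : ℕ → ℝ) (xs x2 : ℕ) (β : ℕ) (v : ℝ) : Prop :=
  IsGreatest {v' | ∃ l i, IncSub a (xs + 1) x2 l ∧ l.length = β ∧ l.head? = some i ∧ v' = a i} v

/-!
Cut a longest increasing subsequence of `[x1, x2]` at `x*`. Its left part, if nonempty, has
some length `α` and so `L(α)` exists and is at most its peak; likewise its right part gives
`R(β)` at least its base, and when both parts are nonempty `L(α) ≤ peak < base ≤ R(β)`.
Conversely, subsequences realizing `L(α) < R(β)` concatenate to one of length `α + β`.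
-/

open List

namespace IncSub

variable {a : ℕ → ℝ} {lo mid hi : ℕ} {l r : List ℕ}

theorem singleton {i : ℕ} (hlo : lo ≤ i) (hhi : i ≤ hi) : IncSub a lo hi [i] :=
  ⟨isChain_singleton i, by simpa using ⟨hlo, hhi⟩, isChain_singleton (a i)⟩

theorem mono {lo' hi' : ℕ} (hlo : lo' ≤ lo) (hhi : hi ≤ hi') (h : IncSub a lo hi l) :
    IncSub a lo' hi' l :=
  ⟨h.1, fun i hi => ⟨hlo.trans (h.2.1 i hi).1, (h.2.1 i hi).2.trans hhi⟩, h.2.2⟩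

theorem append (hlo : lo ≤ mid) (hhi : mid < hi) (hl : IncSub a lo mid l)
    (hr : IncSub a (mid + 1) hi r) (hlink : ∀ i ∈ l.getLast?, ∀ j ∈ r.head?, a i < a j) :
    IncSub a lo hi (l ++ r) := by
  refine ⟨isChain_append.2 ⟨hl.1, hr.1, ?_⟩, ?_, ?_⟩
  · intro i hi j hj
    have := (hl.2.1 i (mem_of_mem_getLast? hi)).2
    have := (hr.2.1 j (mem_of_mem_head? hj)).1
    omega
  · simp only [mem_append]
    rintro k (hk | hk)
    · exact ⟨(hl.2.1 k hk).1, (hl.2.1 k hk).2.trans hhi.le⟩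
    · exact ⟨by have := (hr.2.1 k hk).1; omega, (hr.2.1 k hk).2⟩
  · rw [map_append]
    refine isChain_append.2 ⟨hl.2.2, hr.2.2, ?_⟩
    simp only [getLast?_map, head?_map, Option.mem_map]
    rintro _ ⟨i, hi, rfl⟩ _ ⟨j, hj, rfl⟩
    exact hlink i hi j hj

theorem exists_split (mid : ℕ) (h : IncSub a lo hi l) :
    ∃ l₁ l₂, l = l₁ ++ l₂ ∧ IncSub a lo mid l₁ ∧ IncSub a (mid + 1) hi l₂ ∧
      ∀ i ∈ l₁.getLast?, ∀ j ∈ l₂.head?, a i < a j := by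
  set p : ℕ → Bool := fun i => decide (i ≤ mid)
  obtain ⟨hc, hbnd, hv⟩ := h
  rw [← takeWhile_append_dropWhile (p := p) (l := l)] at hc hbnd hv ⊢
  obtain ⟨hc₁, hc₂, -⟩ := isChain_append.1 hc
  rw [map_append] at hv
  obtain ⟨hv₁, hv₂, hlink⟩ := isChain_append.1 hv
  have hgt : ∀ j ∈ l.dropWhile p, mid < j := by
    intro j hj
    have hne : l.dropWhile p ≠ [] := ne_nil_of_mem hj
    have hhead : mid < (l.dropWhile p).head hne := by
      simpa [p] using head_dropWhile_not p hne
    rw [← cons_head_tail hne, mem_cons] at hj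
    rcases hj with rfl | hj
    · exact hhead
    · have hpw := isChain_iff_pairwise.1 hc₂
      rw [← cons_head_tail hne, pairwise_cons] at hpw
      exact hhead.trans (hpw.1 j hj)
  refine ⟨_, _, rfl, ⟨hc₁, fun i hi => ⟨(hbnd i (mem_append_left _ hi)).1, ?_⟩, hv₁⟩,
    ⟨hc₂, fun j hj => ⟨hgt j hj, (hbnd j (mem_append_right _ hj)).2⟩, hv₂⟩, ?_⟩
  · simpa [p] using mem_takeWhile_imp hi
  · intro i hi j hj
    exact hlink (a i) (getLast?_map ▸ Option.mem_map_of_mem a hi) (a j)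
      (head?_map ▸ Option.mem_map_of_mem a hj)

theorem exists_lPeak_le (h : IncSub a lo hi l) (hne : l ≠ []) :
    ∃ v, LPeak a lo hi l.length v ∧ v ≤ a (l.getLast hne) := by
  have hmem : a (l.getLast hne) ∈
      {v' | ∃ l' i, IncSub a lo hi l' ∧ l'.length = l.length ∧ l'.getLast? = some i ∧ v' = a i} :=
    ⟨l, _, h, rfl, getLast?_eq_some_getLast hne, rfl⟩
  obtain ⟨v, hv⟩ := Set.Finite.isCompact (((Set.finite_Icc lo hi).image a).subset (by
    rintro _ ⟨l', i, hl', -, hlast, rfl⟩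
    exact ⟨i, hl'.2.1 i (mem_of_mem_getLast? hlast), rfl⟩)) |>.exists_isLeast ⟨_, hmem⟩
  exact ⟨v, hv, hv.2 hmem⟩

theorem exists_rBase_ge (h : IncSub a (lo + 1) hi l) (hne : l ≠ []) :
    ∃ v, RBase a lo hi l.length v ∧ a (l.head hne) ≤ v := by
  have hmem : a (l.head hne) ∈
      {v' | ∃ l' i, IncSub a (lo + 1) hi l' ∧ l'.length = l.length ∧ l'.head? = some i ∧
        v' = a i} :=
    ⟨l, _, h, rfl, head?_eq_some_head hne, rfl⟩
  obtain ⟨v, hv⟩ := Set.Finite.isCompact (((Set.finite_Icc (lo + 1) hi).image a).subset (by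
    rintro _ ⟨l', i, hl', -, hhead, rfl⟩
    exact ⟨i, hl'.2.1 i (mem_of_mem_head? hhead), rfl⟩)) |>.exists_isGreatest ⟨_, hmem⟩
  exact ⟨v, hv, hv.2 hmem⟩

end IncSub

theorem stmt6_general (a : ℕ → ℝ)
    (x1 xs x2 : ℕ) (hx1s : x1 ≤ xs) (hsx2 : xs < x2)
    (T : ℕ)
    (hT : IsGreatest {t | ∃ l, IncSub a x1 x2 l ∧ l.length = t} T) :
    IsGreatest
      ({α | 1 ≤ α ∧ ∃ v, LPeak a x1 xs α v} ∪
       {β | 1 ≤ β ∧ ∃ v, RBase a xs x2 β v} ∪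
       {t | ∃ α β vL vR, LPeak a x1 xs α vL ∧ RBase a xs x2 β vR ∧ vL < vR ∧ t = α + β}) T := by
  refine ⟨?_, ?_⟩
  · have hT_pos : 1 ≤ T := hT.2 ⟨[x1], .singleton le_rfl (hx1s.trans hsx2.le), rfl⟩
    obtain ⟨l, hl, rfl⟩ := hT.1
    obtain ⟨l₁, l₂, rfl, h₁, h₂, hlink⟩ := hl.exists_split xs
    rcases eq_or_ne l₂ [] with rfl | hne₂
    · rw [append_nil] at hT_pos ⊢
      have hne₁ : l₁ ≠ [] := ne_nil_of_length_pos hT_pos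
      exact .inl (.inl ⟨hT_pos, (h₁.exists_lPeak_le hne₁).imp fun _ h => h.1⟩)
    rcases eq_or_ne l₁ [] with rfl | hne₁
    · exact .inl (.inr ⟨hT_pos, (h₂.exists_rBase_ge hne₂).imp fun _ h => h.1⟩)
    obtain ⟨vL, hL, hvL⟩ := h₁.exists_lPeak_le hne₁
    obtain ⟨vR, hR, hvR⟩ := h₂.exists_rBase_ge hne₂
    have hlast_lt_head := hlink _ (getLast?_eq_some_getLast hne₁) _ (head?_eq_some_head hne₂)
    exact .inr ⟨_, _, vL, vR, hL, hR, by linarith, length_append⟩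
  · rintro t ((⟨-, v, hv⟩ | ⟨-, v, hv⟩) | ⟨α, β, vL, vR, hL, hR, hlt, rfl⟩)
    · obtain ⟨l, -, hl, rfl, -⟩ := hv.1
      exact hT.2 ⟨l, hl.mono le_rfl hsx2.le, rfl⟩
    · obtain ⟨l, -, hl, rfl, -⟩ := hv.1
      exact hT.2 ⟨l, hl.mono (hx1s.trans xs.le_succ) le_rfl, rfl⟩
    · obtain ⟨l, i, hl, rfl, hlast, rfl⟩ := hL.1
      obtain ⟨r, j, hr, rfl, hhead, rfl⟩ := hR.1
      refine hT.2 ⟨l ++ r, hl.append hx1s hsx2 hr ?_, length_append⟩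
      simp only [hlast, hhead, Option.mem_some_iff]
      rintro _ rfl _ rfl
      exact hlt

theorem stmt6 (n : ℕ) (a : ℕ → ℝ)
    (hinj : ∀ i ∈ Finset.Icc 1 n, ∀ j ∈ Finset.Icc 1 n, a i = a j → i = j)
    (x1 xs x2 : ℕ) (hx1 : 1 ≤ x1) (hx1s : x1 ≤ xs) (hsx2 : xs < x2) (hx2 : x2 ≤ n)
    (T : ℕ)
    (hT : IsGreatest {t | ∃ l, IncSub a x1 x2 l ∧ l.length = t} T) :
    IsGreatest
      ({α | 1 ≤ α ∧ ∃ v, LPeak a x1 xs α v} ∪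
       {β | 1 ≤ β ∧ ∃ v, RBase a xs x2 β v} ∪
       {t | ∃ α β vL vR, LPeak a x1 xs α vL ∧ RBase a xs x2 β vR ∧ vL < vR ∧ t = α + β}) T :=
  stmt6_general a x1 xs x2 hx1s hsx2 T hT
end

section
/- Let P be a finite set of points in the plane, q an axis-aligned rectangle, and p_i ∈ P ∩ q. With weights w(p_j) defined as the maximum length of an increasing chain in P ∩ NE(p_i) starting at p_i and ending at p_j, we have: LIS(P ∩ q ∩ NE(p_i)) = max{ w(p_j) : p_j ∈ P ∩ q ∩ NE(p_i) and a chain from p_i to p_j exists }. -/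
/-!
A longest chain in `P ∩ q ∩ NE(pᵢ)` starts at `pᵢ`: every other point of that set lies strictly
north-east of `pᵢ` because coordinates are distinct, so otherwise `pᵢ` could be prepended. Such a
chain runs from `pᵢ` to its last point `pⱼ`, whence `LIS ≤ w(pⱼ)`. Conversely, a chain from `pᵢ`
to a point `pⱼ ∈ q` stays in the box `[pᵢ, pⱼ] ⊆ q`, whence `w(pⱼ) ≤ LIS`.
-/

def Inc2 (p q : ℝ × ℝ) : Prop := p.1 < q.1 ∧ p.2 < q.2

def InRect (x1 x2 y1 y2 : ℝ) (p : ℝ × ℝ) : Prop :=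
  x1 ≤ p.1 ∧ p.1 ≤ x2 ∧ y1 ≤ p.2 ∧ p.2 ≤ y2

def ChainIn (T : Set (ℝ × ℝ)) (l : List (ℝ × ℝ)) : Prop :=
  l.Chain' Inc2 ∧ ∀ p ∈ l, p ∈ T

def NE2 (p : ℝ × ℝ) : Set (ℝ × ℝ) := {r | p.1 ≤ r.1 ∧ p.2 ≤ r.2}

lemma Inc2.le {p q : ℝ × ℝ} (h : Inc2 p q) : p ≤ q := ⟨h.1.le, h.2.le⟩

lemma inc2_of_le_of_ne {p q : ℝ × ℝ} (hle : p ≤ q) (hne : p.1 ≠ q.1 ∧ p.2 ≠ q.2) : Inc2 p q :=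
  ⟨hle.1.lt_of_ne hne.1, hle.2.lt_of_ne hne.2⟩

lemma inRect_iff {x1 x2 y1 y2 : ℝ} {p : ℝ × ℝ} :
    InRect x1 x2 y1 y2 p ↔ p ∈ Set.Icc (x1, y1) (x2, y2) := by
  simp only [InRect, Set.mem_Icc, Prod.le_def]
  tauto

lemma List.IsChain.le_of_getLast?_eq_some {α : Type*} [Preorder α] {R : α → α → Prop}
    (hR : ∀ a b, R a b → a ≤ b) {l : List α} (hl : l.IsChain R) {q : α}
    (hq : l.getLast? = some q) {p : α} (hp : p ∈ l) : p ≤ q :=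
  hl.backwards_induction (· ≤ q) l (fun x y hxy hy => (hR x y hxy).trans hy)
    (fun _ => (List.getLast_of_mem_getLast? hq).le) p hp

lemma ChainIn.mono {S T : Set (ℝ × ℝ)} {l : List (ℝ × ℝ)} (hl : ChainIn S l) (hST : S ⊆ T) :
    ChainIn T l :=
  ⟨hl.1, fun p hp => hST (hl.2 p hp)⟩

lemma ChainIn.inRect_of_getLast? {S : Set (ℝ × ℝ)} {x1 x2 y1 y2 : ℝ} {a b : ℝ × ℝ}
    {l : List (ℝ × ℝ)} (hl : ChainIn {x | x ∈ S ∧ x ∈ NE2 a} l) (hb : l.getLast? = some b)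
    (ha : InRect x1 x2 y1 y2 a) (hbq : InRect x1 x2 y1 y2 b) :
    ChainIn {x | x ∈ S ∧ InRect x1 x2 y1 y2 x ∧ x ∈ NE2 a} l := by
  refine ⟨hl.1, fun p hp => ⟨(hl.2 p hp).1, ?_, (hl.2 p hp).2⟩⟩
  rw [inRect_iff] at ha hbq ⊢
  exact Set.Icc_subset_Icc ha.1 hbq.2
    ⟨(hl.2 p hp).2, List.IsChain.le_of_getLast?_eq_some (fun _ _ => Inc2.le) hl.1 hb hp⟩

lemma ChainIn.head?_eq_of_length_maximal {T : Set (ℝ × ℝ)} {l : List (ℝ × ℝ)}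
    (hl : ChainIn T l) (hne : l ≠ []) {a : ℝ × ℝ} (ha : a ∈ T) (ha_lt : ∀ x ∈ T, x ≠ a → Inc2 a x)
    (hmax : ∀ l', ChainIn T l' → l' ≠ [] → l'.length ≤ l.length) : l.head? = some a := by
  obtain ⟨b, t, rfl⟩ := List.exists_cons_of_ne_nil hne
  by_contra hba
  have hb : b ≠ a := fun h => hba (by rw [h]; rfl)
  have hlonger : ChainIn T (a :: b :: t) :=
    ⟨List.isChain_cons_cons.mpr ⟨ha_lt b (hl.2 b List.mem_cons_self) hb, hl.1⟩,
      List.forall_mem_cons.mpr ⟨ha, hl.2⟩⟩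
  have := hmax _ hlonger (List.cons_ne_nil _ _)
  simp at this

theorem stmt14 (P : Finset (ℝ × ℝ))
    (hdist : ∀ p ∈ P, ∀ q ∈ P, p ≠ q → p.1 ≠ q.1 ∧ p.2 ≠ q.2)
    (x1 x2 y1 y2 : ℝ) (pi : ℝ × ℝ)
    (hpiP : pi ∈ P) (hpiq : InRect x1 x2 y1 y2 pi)
    (w : (ℝ × ℝ) → ℕ)
    (hw : ∀ pj, (∃ l, ChainIn {x | x ∈ P ∧ x ∈ NE2 pi} l ∧
        l.head? = some pi ∧ l.getLast? = some pj) →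
      IsGreatest {t | ∃ l, ChainIn {x | x ∈ P ∧ x ∈ NE2 pi} l ∧
        l.head? = some pi ∧ l.getLast? = some pj ∧ l.length = t} (w pj))
    (L : ℕ)
    (hL : IsGreatest {t | ∃ l, ChainIn {x | x ∈ P ∧ InRect x1 x2 y1 y2 x ∧ x ∈ NE2 pi} l ∧
      l ≠ [] ∧ l.length = t} L) :
    IsGreatest {t | ∃ pj, (pj ∈ P ∧ InRect x1 x2 y1 y2 pj ∧ pj ∈ NE2 pi) ∧
      (∃ l, ChainIn {x | x ∈ P ∧ x ∈ NE2 pi} l ∧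
        l.head? = some pi ∧ l.getLast? = some pj) ∧ t = w pj} L := by
  have w_le : ∀ pj, InRect x1 x2 y1 y2 pj → (∃ l, ChainIn {x | x ∈ P ∧ x ∈ NE2 pi} l ∧
      l.head? = some pi ∧ l.getLast? = some pj) → w pj ≤ L := by
    intro pj hpj hex
    obtain ⟨l, hl, hhead, hlast, hlen⟩ := (hw pj hex).1
    exact hL.2 ⟨l, hl.inRect_of_getLast? hlast hpiq hpj, by rintro rfl; simp at hhead, hlen⟩
  obtain ⟨l, hl, hne, rfl⟩ := hL.1
  have hhead : l.head? = some pi :=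
    hl.head?_eq_of_length_maximal hne ⟨hpiP, hpiq, le_rfl, le_rfl⟩
      (fun x hx hxpi => inc2_of_le_of_ne hx.2.2 (hdist pi hpiP x hx.1 (Ne.symm hxpi)))
      (fun l' hl' hne' => hL.2 ⟨l', hl', hne', rfl⟩)
  set pj := l.getLast hne
  have hlast : l.getLast? = some pj := List.getLast?_eq_some_getLast hne
  have hpj := hl.2 pj (List.getLast_mem hne)
  have hl' : ChainIn {x | x ∈ P ∧ x ∈ NE2 pi} l := hl.mono fun x hx => ⟨hx.1, hx.2.2⟩
  have hex : ∃ l, ChainIn {x | x ∈ P ∧ x ∈ NE2 pi} l ∧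
      l.head? = some pi ∧ l.getLast? = some pj := ⟨l, hl', hhead, hlast⟩
  refine ⟨⟨pj, hpj, hex, le_antisymm ((hw pj hex).2 ⟨l, hl', hhead, hlast, rfl⟩)
    (w_le pj hpj.2.1 hex)⟩, ?_⟩
  rintro _ ⟨pj', ⟨-, hpj'q, -⟩, hex', rfl⟩
  exact w_le pj' hpj'q hex'
end

section
/- With the construction a_i = z_i + f_i · n (where z_i ∈ {1,...,n} and f_i counts prior occurrences of z_i), color each index i by z_i. Then for any contiguous range [x1, x2], the maximum length of a monochromatic increasing subsequence of (a_i) within [x1, x2] equals the maximum multiplicity (mode frequency) of any value in (z_{x1}, ..., z_{x2}); moreover any color achieving this maximum monochromatic LIS is a mode of the range. -/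
/-- `priorCount z i` is the number of indices `j < i` (with `j ≥ 1`) such that `z j = z i`. -/
def priorCount (z : ℕ → ℕ) (i : ℕ) : ℕ :=
  ((Finset.Ico 1 i).filter fun j => z j = z i).card

/-- Multiplicity of the value `v` in the range of indices `[x1, x2]`. -/
def mult (z : ℕ → ℕ) (x1 x2 v : ℕ) : ℕ :=
  ((Finset.Icc x1 x2).filter fun i => z i = v).card

/-- A monochromatic increasing subsequence of color `v` within `[x1, x2]`:
strictly increasing indices, all of color `v`, with strictly increasing `a`-values. -/
def MonoSub (z a : ℕ → ℕ) (x1 x2 v : ℕ) (l : List ℕ) : Prop :=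
  l.Chain' (· < ·) ∧ (∀ i ∈ l, x1 ≤ i ∧ i ≤ x2 ∧ z i = v) ∧ (l.map a).Chain' (· < ·)

/-! Along the occurrences of one color `v`, `a = v + (prior occurrences) * n` strictly increases,
so the occurrences of `v` in `[x1, x2]`, listed in order, form a
monochromatic increasing subsequence of length `mult v`; conversely every monochromatic increasing
subsequence of color `v` consists of distinct occurrences of `v`. Hence the longest one of color `v`
has length exactly `mult v`. -/

lemma priorCount_lt_priorCount (z : ℕ → ℕ) {i j : ℕ} (hi : 1 ≤ i) (hij : i < j)
    (hz : z i = z j) : priorCount z i < priorCount z j := by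
  unfold priorCount
  rw [hz]
  refine Finset.card_lt_card <| (Finset.ssubset_iff_of_subset ?_).2 ⟨i, ?_, ?_⟩
  · exact Finset.monotone_filter_left _ (Finset.Ico_subset_Ico_right hij.le)
  · simp [hi, hij, hz]
  · simp

lemma lt_of_color_eq {n : ℕ} (hn : 1 ≤ n) {z a : ℕ → ℕ}
    (ha : ∀ i, a i = z i + priorCount z i * n) {i j : ℕ} (hi : 1 ≤ i) (hij : i < j)
    (hz : z i = z j) : a i < a j := by
  rw [ha i, ha j, hz]
  have := Nat.mul_lt_mul_of_pos_right (priorCount_lt_priorCount z hi hij hz) hn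
  omega

lemma MonoSub.length_le_mult {z a : ℕ → ℕ} {x1 x2 v : ℕ} {l : List ℕ}
    (h : MonoSub z a x1 x2 v l) : l.length ≤ mult z x1 x2 v := by
  obtain ⟨hchain, hmem, -⟩ := h
  have hnodup : l.Nodup := (List.isChain_iff_pairwise.mp hchain).imp ne_of_lt
  rw [← List.toFinset_card_of_nodup hnodup]
  refine Finset.card_le_card fun i hi => ?_
  obtain ⟨h1, h2, h3⟩ := hmem i (List.mem_toFinset.mp hi)
  simp [h1, h2, h3]

lemma exists_monoSub_length_eq_mult {n : ℕ} (hn : 1 ≤ n) {z a : ℕ → ℕ}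
    (ha : ∀ i, a i = z i + priorCount z i * n) {x1 : ℕ} (hx1 : 1 ≤ x1) (x2 v : ℕ) :
    ∃ l, MonoSub z a x1 x2 v l ∧ l.length = mult z x1 x2 v := by
  set l := ((Finset.Icc x1 x2).filter fun i => z i = v).sort (· ≤ ·)
  have hmem : ∀ i ∈ l, x1 ≤ i ∧ i ≤ x2 ∧ z i = v := by
    intro i hi
    simpa [l, and_assoc] using hi
  have hsorted : l.Pairwise (· < ·) := (Finset.sortedLT_sort _).pairwise
  have hincr : l.Pairwise fun i j => a i < a j :=
    hsorted.imp_of_mem fun hi hj hij =>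
      lt_of_color_eq hn ha (hx1.trans (hmem _ hi).1) hij
        ((hmem _ hi).2.2.trans (hmem _ hj).2.2.symm)
  exact ⟨l, ⟨hsorted.isChain, hmem, (List.isChain_map a).mpr hincr.isChain⟩,
    Finset.length_sort _⟩

theorem stmt16_general (n : ℕ) (hn : 1 ≤ n) (z : ℕ → ℕ)
    (a : ℕ → ℕ) (ha : ∀ i, a i = z i + priorCount z i * n)
    (x1 x2 : ℕ) (hx1 : 1 ≤ x1)
    (M : ℕ) (hM : IsGreatest {t | ∃ v, t = mult z x1 x2 v} M) :
    IsGreatest {t | ∃ v l, MonoSub z a x1 x2 v l ∧ l.length = t} M ∧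
      ∀ v l, MonoSub z a x1 x2 v l → l.length = M →
        IsGreatest {t | ∃ w, t = mult z x1 x2 w} (mult z x1 x2 v) := by
  obtain ⟨⟨v₀, rfl⟩, hmax⟩ := hM
  have hle : ∀ v l, MonoSub z a x1 x2 v l → l.length ≤ mult z x1 x2 v₀ :=
    fun v l hl => hl.length_le_mult.trans (hmax ⟨v, rfl⟩)
  refine ⟨⟨?_, ?_⟩, fun v l hl hlen => ⟨⟨v, rfl⟩, ?_⟩⟩
  · obtain ⟨l, hl, hlen⟩ := exists_monoSub_length_eq_mult hn ha hx1 x2 v₀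
    exact ⟨v₀, l, hl, hlen⟩
  · rintro _ ⟨v, l, hl, rfl⟩
    exact hle v l hl
  · rwa [le_antisymm (hmax ⟨v, rfl⟩) (hlen ▸ hl.length_le_mult)]

theorem stmt16 (n : ℕ) (hn : 1 ≤ n) (z : ℕ → ℕ)
    (hz : ∀ i ∈ Finset.Icc 1 n, z i ∈ Finset.Icc 1 n)
    (a : ℕ → ℕ) (ha : ∀ i, a i = z i + priorCount z i * n)
    (x1 x2 : ℕ) (hx1 : 1 ≤ x1) (hx12 : x1 ≤ x2) (hx2 : x2 ≤ n)
    (M : ℕ) (hM : IsGreatest {t | ∃ v, t = mult z x1 x2 v} M) :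
    IsGreatest {t | ∃ v l, MonoSub z a x1 x2 v l ∧ l.length = t} M ∧
      ∀ v l, MonoSub z a x1 x2 v l → l.length = M →
        IsGreatest {t | ∃ w, t = mult z x1 x2 w} (mult z x1 x2 v) :=
  stmt16_general n hn z a ha x1 x2 hx1 M hM
end
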